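/- Let ε ∈ k and let n ∈ ℕ. If n_5(k) contains a Lie subalgebra isomorphic to L_{6,24}(ε), then there exists a ∈ k with a² = ε. Consequently, if a² ≠ ε for every a ∈ k, then any Lie subalgebra of n_n(k) isomorphic to L_{6,24}(ε) satisfies n ≥ 6. -/

import Mathlib

/-!
Through an injective Lie homomorphism the basis becomes matrices `X₁, X₂, X₃, X₄, Z₁, Z₂` in
`n₅(k)` (for `n < 5`, pad with zeros). As `Z₁ = [X₁, [X₁, X₂]]` and `Z₂ = [X₂, [X₁, X₂]]` lie three
steps above the diagonal, only their entries `(0,3)`, `(1,4)`, `(0,4)` survive; after applying the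
antitranspose automorphism if necessary, some `Zⱼ` has a nonzero `(1,4)` entry. Centrality of
`Z₁, Z₂` then makes the `(0,1)` and `(3,4)` entries of `X₁, X₂, X₄`, and the `(0,3)` and `(1,4)`
entries of `Z₁, Z₂`, proportional with one common ratio `t`, and `[Xᵢ, X₄] ∈ span(Z₁, Z₂)` kills the
superdiagonal of `X₄`. Comparing entries in `[X₁, X₄] = ε Z₂` and `[X₂, X₄] = Z₁` now gives
`ε z₂² = z₁²` for `zⱼ = Zⱼ(1,4)` when `t ≠ 0`, and `ε d₂² = d₁²` for `dᵢ = Xᵢ(3,4)` when `t = 0`;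
linear independence of `Z₁, Z₂` keeps the relevant pair away from zero.
-/

attribute [local instance 100] LieRing.ofAssociativeRing

/-- The Lie algebra `n_n(k)` of strictly upper triangular `n × n` matrices over `k`. -/
def strictUpper (k : Type*) [Field k] (n : ℕ) :
    LieSubalgebra k (Matrix (Fin n) (Fin n) k) where
  carrier := {A | ∀ i j : Fin n, j ≤ i → A i j = 0}
  add_mem' := by
    intro A B hA hB i j hij
    simp [Matrix.add_apply, hA i j hij, hB i j hij]
  zero_mem' := by intro i j hij; simp
  smul_mem' := by
    intro c A hA i j hij
    simp [Matrix.smul_apply, hA i j hij]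
  lie_mem' := by
    intro A B hA hB i j hij
    have key : ∀ (X Y : Matrix (Fin n) (Fin n) k),
        (∀ i j : Fin n, j ≤ i → X i j = 0) → (∀ i j : Fin n, j ≤ i → Y i j = 0) →
        (X * Y) i j = 0 := by
      intro X Y hX hY
      rw [Matrix.mul_apply]
      apply Finset.sum_eq_zero
      intro l _
      by_cases h : l ≤ i
      · rw [hX i l h, zero_mul]
      · push_neg at h
        rw [hY l j (hij.trans h.le), mul_zero]
    have hbr : ⁅A, B⁆ = A * B - B * A := Ring.lie_def A B
    rw [hbr, Matrix.sub_apply, key A B hA hB, key B A hB hA, sub_zero]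

/-- A basis of a Lie algebra realizing the bracket table of `L_{6,24}(ε)`:
`[X1,X2] = X3`, `[X1,X3] = Z1`, `[X1,X4] = ε • Z2`, `[X2,X3] = Z2`, `[X2,X4] = Z1`, all other
brackets of basis vectors zero.  Here `X1, X2, X3, X4, Z1, Z2` are `b 0, ..., b 5`. -/
def IsL624Basis {k L : Type*} [Field k] [LieRing L] [LieAlgebra k L] (ε : k)
    (b : Module.Basis (Fin 6) k L) : Prop :=
  ⁅b 0, b 1⁆ = b 2 ∧ ⁅b 0, b 2⁆ = b 4 ∧ ⁅b 0, b 3⁆ = ε • b 5 ∧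
  ⁅b 1, b 2⁆ = b 5 ∧ ⁅b 1, b 3⁆ = b 4 ∧
  ⁅b 0, b 4⁆ = 0 ∧ ⁅b 0, b 5⁆ = 0 ∧ ⁅b 1, b 4⁆ = 0 ∧ ⁅b 1, b 5⁆ = 0 ∧
  ⁅b 2, b 3⁆ = 0 ∧ ⁅b 2, b 4⁆ = 0 ∧ ⁅b 2, b 5⁆ = 0 ∧
  ⁅b 3, b 4⁆ = 0 ∧ ⁅b 3, b 5⁆ = 0 ∧ ⁅b 4, b 5⁆ = 0

namespace Matrix

variable {R : Type*} {n : ℕ}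

def VanishesBelowSuperdiag [Zero R] (s : ℕ) (A : Matrix (Fin n) (Fin n) R) : Prop :=
  ∀ i j : Fin n, (j : ℕ) < i + s → A i j = 0

namespace VanishesBelowSuperdiag

variable {s t : ℕ} {A B : Matrix (Fin n) (Fin n) R}

theorem mul [NonUnitalNonAssocSemiring R] (hA : VanishesBelowSuperdiag s A)
    (hB : VanishesBelowSuperdiag t B) : VanishesBelowSuperdiag (s + t) (A * B) := by
  intro i j hij
  rw [mul_apply]
  refine Finset.sum_eq_zero fun l _ => ?_
  rcases lt_or_ge (l : ℕ) (i + s) with h | h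
  · rw [hA i l h, zero_mul]
  · rw [hB l j (by omega), mul_zero]

theorem lie [Ring R] (hA : VanishesBelowSuperdiag s A) (hB : VanishesBelowSuperdiag t B) :
    VanishesBelowSuperdiag (s + t) ⁅A, B⁆ := by
  intro i j hij
  rw [Ring.lie_def, sub_apply, hA.mul hB i j hij, hB.mul hA i j (by omega), sub_zero]

theorem smul [Zero R] [SMulZeroClass R R] (c : R) (hA : VanishesBelowSuperdiag s A) :
    VanishesBelowSuperdiag s (c • A) := by
  intro i j hij
  rw [smul_apply, hA i j hij, smul_zero]

theorem sub [AddGroup R] (hA : VanishesBelowSuperdiag s A) (hB : VanishesBelowSuperdiag s B) :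
    VanishesBelowSuperdiag s (A - B) := by
  intro i j hij
  rw [sub_apply, hA i j hij, hB i j hij, sub_zero]

end VanishesBelowSuperdiag

end Matrix

open scoped Matrix

theorem mem_strictUpper_iff {k : Type*} [Field k] {n : ℕ} {A : Matrix (Fin n) (Fin n) k} :
    A ∈ strictUpper k n ↔ A.VanishesBelowSuperdiag 1 :=
  forall₂_congr fun i j => by rw [Fin.le_iff_val_le_val, Nat.lt_succ_iff]

section Padding

variable (R : Type*) [CommRing R] {m n : ℕ}

/-- Conjugation by this matrix pads an `m × m` matrix with zeros to an `n × n` one. -/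
def castLEMatrix (h : m ≤ n) : Matrix (Fin m) (Fin n) R :=
  (1 : Matrix (Fin n) (Fin n) R).submatrix (Fin.castLE h) id

theorem castLEMatrix_mul_transpose (h : m ≤ n) :
    castLEMatrix R h * (castLEMatrix R h)ᵀ = 1 := by
  rw [castLEMatrix, Matrix.transpose_submatrix, Matrix.transpose_one,
    ← Matrix.submatrix_mul _ _ _ _ _ Function.bijective_id, mul_one,
    Matrix.submatrix_one _ (Fin.castLE_injective h)]

def padLieHom (h : m ≤ n) : Matrix (Fin m) (Fin m) R →ₗ⁅R⁆ Matrix (Fin n) (Fin n) R where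
  toFun A := (castLEMatrix R h)ᵀ * A * castLEMatrix R h
  map_add' A B := by rw [Matrix.mul_add, Matrix.add_mul]
  map_smul' c A := by rw [RingHom.id_apply, Matrix.mul_smul, Matrix.smul_mul]
  map_lie' {A B} := by
    have hP := castLEMatrix_mul_transpose R h
    simp only [Ring.lie_def, Matrix.mul_sub, Matrix.sub_mul, Matrix.mul_assoc]
    simp only [← Matrix.mul_assoc (castLEMatrix R h), hP, Matrix.one_mul]

theorem padLieHom_injective (h : m ≤ n) : Function.Injective (padLieHom R h) := by
  intro A B hAB
  have key := congrArg (fun M => castLEMatrix R h * M * (castLEMatrix R h)ᵀ) hAB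
  simpa [padLieHom, ← Matrix.mul_assoc, castLEMatrix_mul_transpose,
    Matrix.mul_assoc _ _ (castLEMatrix R h)ᵀ] using key

theorem padLieHom_mem_strictUpper {k : Type*} [Field k] (h : m ≤ n) {A : Matrix (Fin m) (Fin m) k}
    (hA : A ∈ strictUpper k m) : padLieHom k h A ∈ strictUpper k n := by
  intro i j hij
  simp only [padLieHom, LieHom.coe_mk, Matrix.mul_apply, Matrix.transpose_apply, castLEMatrix,
    Matrix.submatrix_apply, id, Matrix.one_apply]
  refine Finset.sum_eq_zero fun b _ => ?_
  rw [Finset.sum_mul]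
  refine Finset.sum_eq_zero fun a _ => ?_
  split_ifs with ha hb <;> simp only [zero_mul, mul_zero, one_mul, mul_one]
  subst ha hb
  exact hA a b hij

end Padding

section Antitranspose

variable (R : Type*) [CommRing R] {n : ℕ}

def antitransposeLieHom : Matrix (Fin n) (Fin n) R →ₗ⁅R⁆ Matrix (Fin n) (Fin n) R where
  toFun A := -(Aᵀ.submatrix Fin.rev Fin.rev)
  map_add' A B := by ext; simp [add_comm]
  map_smul' c A := by simp [Matrix.transpose_smul, Matrix.submatrix_smul]
  map_lie' {A B} := by
    rw [Matrix.lie_transpose, Ring.lie_def, Ring.lie_def, neg_mul_neg, neg_mul_neg,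
      ← Matrix.submatrix_mul _ _ _ _ _ Fin.rev_bijective,
      ← Matrix.submatrix_mul _ _ _ _ _ Fin.rev_bijective]
    ext i j
    simp

theorem antitransposeLieHom_apply (A : Matrix (Fin n) (Fin n) R) (i j : Fin n) :
    antitransposeLieHom R A i j = -A j.rev i.rev := rfl

theorem antitransposeLieHom_injective : Function.Injective (antitransposeLieHom R (n := n)) := by
  intro A B h
  ext i j
  simpa [antitransposeLieHom_apply] using congr_fun₂ h j.rev i.rev

theorem antitransposeLieHom_mem_strictUpper {k : Type*} [Field k] {A : Matrix (Fin n) (Fin n) k}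
    (hA : A ∈ strictUpper k n) : antitransposeLieHom k A ∈ strictUpper k n := by
  intro i j hij
  rw [antitransposeLieHom_apply, hA _ _ (Fin.rev_le_rev.mpr hij), neg_zero]

end Antitranspose

namespace Matrix.VanishesBelowSuperdiag

variable {k : Type*} [Field k] {A B : Matrix (Fin 5) (Fin 5) k}

theorem lie_apply_02 (hA : VanishesBelowSuperdiag 1 A) (hB : VanishesBelowSuperdiag 1 B) :
    ⁅A, B⁆ 0 2 = A 0 1 * B 1 2 - B 0 1 * A 1 2 := by
  unfold VanishesBelowSuperdiag at hA hB
  simp (disch := decide) only [Ring.lie_def, sub_apply, mul_apply, Fin.sum_univ_five, hA, hB,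
    zero_mul, mul_zero, add_zero, zero_add]

theorem lie_apply_13 (hA : VanishesBelowSuperdiag 1 A) (hB : VanishesBelowSuperdiag 1 B) :
    ⁅A, B⁆ 1 3 = A 1 2 * B 2 3 - B 1 2 * A 2 3 := by
  unfold VanishesBelowSuperdiag at hA hB
  simp (disch := decide) only [Ring.lie_def, sub_apply, mul_apply, Fin.sum_univ_five, hA, hB,
    zero_mul, mul_zero, add_zero, zero_add]

theorem lie_apply_24 (hA : VanishesBelowSuperdiag 1 A) (hB : VanishesBelowSuperdiag 1 B) :
    ⁅A, B⁆ 2 4 = A 2 3 * B 3 4 - B 2 3 * A 3 4 := by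
  unfold VanishesBelowSuperdiag at hA hB
  simp (disch := decide) only [Ring.lie_def, sub_apply, mul_apply, Fin.sum_univ_five, hA, hB,
    zero_mul, mul_zero, add_zero, zero_add]

theorem lie_apply_03 (hA : VanishesBelowSuperdiag 1 A) (hB : VanishesBelowSuperdiag 1 B) :
    ⁅A, B⁆ 0 3 = A 0 1 * B 1 3 + A 0 2 * B 2 3 - B 0 1 * A 1 3 - B 0 2 * A 2 3 := by
  unfold VanishesBelowSuperdiag at hA hB
  simp (disch := decide) only [Ring.lie_def, sub_apply, mul_apply, Fin.sum_univ_five, hA, hB,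
    zero_mul, mul_zero, add_zero, zero_add]
  ring

theorem lie_apply_03_of_two (hA : VanishesBelowSuperdiag 1 A) (hB : VanishesBelowSuperdiag 2 B) :
    ⁅A, B⁆ 0 3 = A 0 1 * B 1 3 - B 0 2 * A 2 3 := by
  unfold VanishesBelowSuperdiag at hA hB
  simp (disch := decide) only [Ring.lie_def, sub_apply, mul_apply, Fin.sum_univ_five, hA, hB,
    zero_mul, mul_zero, add_zero, zero_add]

theorem lie_apply_14_of_two (hA : VanishesBelowSuperdiag 1 A) (hB : VanishesBelowSuperdiag 2 B) :
    ⁅A, B⁆ 1 4 = A 1 2 * B 2 4 - B 1 3 * A 3 4 := by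
  unfold VanishesBelowSuperdiag at hA hB
  simp (disch := decide) only [Ring.lie_def, sub_apply, mul_apply, Fin.sum_univ_five, hA, hB,
    zero_mul, mul_zero, add_zero, zero_add]

theorem lie_apply_04_of_two (hA : VanishesBelowSuperdiag 1 A) (hB : VanishesBelowSuperdiag 2 B) :
    ⁅A, B⁆ 0 4 = A 0 1 * B 1 4 + A 0 2 * B 2 4 - B 0 2 * A 2 4 - B 0 3 * A 3 4 := by
  unfold VanishesBelowSuperdiag at hA hB
  simp (disch := decide) only [Ring.lie_def, sub_apply, mul_apply, Fin.sum_univ_five, hA, hB,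
    zero_mul, mul_zero, add_zero, zero_add]
  ring

theorem lie_apply_04_of_three (hA : VanishesBelowSuperdiag 1 A) (hB : VanishesBelowSuperdiag 3 B) :
    ⁅A, B⁆ 0 4 = A 0 1 * B 1 4 - B 0 3 * A 3 4 := by
  unfold VanishesBelowSuperdiag at hA hB
  simp (disch := decide) only [Ring.lie_def, sub_apply, mul_apply, Fin.sum_univ_five, hA, hB,
    zero_mul, mul_zero, add_zero, zero_add]

theorem ext_of_three (hA : VanishesBelowSuperdiag 3 A) (hB : VanishesBelowSuperdiag 3 B)
    (h03 : A 0 3 = B 0 3) (h14 : A 1 4 = B 1 4) (h04 : A 0 4 = B 0 4) : A = B := by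
  ext i j
  by_cases hij : (j : ℕ) < i + 3
  · rw [hA i j hij, hB i j hij]
  · fin_cases i <;> fin_cases j <;> first | assumption | simp at hij

theorem two_of_superdiag_eq_zero (hA : VanishesBelowSuperdiag 1 A) (h01 : A 0 1 = 0)
    (h12 : A 1 2 = 0) (h23 : A 2 3 = 0) (h34 : A 3 4 = 0) : VanishesBelowSuperdiag 2 A := by
  intro i j hij
  by_cases h : (j : ℕ) < i + 1
  · exact hA i j h
  · fin_cases i <;> fin_cases j <;> first | assumption | simp at h hij

end Matrix.VanishesBelowSuperdiag

section Algebra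

variable {k : Type*} [Field k]

theorem exists_common_ratio {ι κ : Type*} {a d : ι → k} {x y : κ → k} (hy : ∃ j, y j ≠ 0)
    (h : ∀ i j, a i * y j = d i * x j) (hx : (∀ i, a i = 0) → ∀ j, x j = 0) :
    ∃ t, (∀ i, a i = t * d i) ∧ ∀ j, x j = t * y j := by
  obtain ⟨j₀, hy⟩ := hy
  have ha : ∀ i, a i = x j₀ / y j₀ * d i := fun i => by
    rw [div_mul_eq_mul_div, eq_div_iff hy]
    linear_combination h i j₀
  refine ⟨x j₀ / y j₀, ha, fun j => ?_⟩
  by_cases hd : ∃ i, d i ≠ 0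
  · obtain ⟨i, hi⟩ := hd
    apply mul_left_cancel₀ hi
    linear_combination -(h i j) + y j * ha i
  · push Not at hd
    have ha0 : ∀ i, a i = 0 := fun i => by rw [ha i, hd i, mul_zero]
    rw [hx ha0 j, hx ha0 j₀, zero_div, zero_mul]

/- In the following lemmas `bᵢ, cᵢ, dᵢ` stand for the entries `(1,2), (2,3), (3,4)` of `Xᵢ`, and
`pᵢ, qᵢ, rᵢ, mᵢ` for its entries `(0,2), (1,3), (2,4), (0,3)`; `Q, R` are the entries `(1,3), (2,4)`
of `X₃`, `zⱼ, wⱼ` the entries `(1,4), (0,4)` of `Zⱼ`, and `t` is the ratio `Xᵢ(0,1) / Xᵢ(3,4)`.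
Each hypothesis is an entry of one of the defining brackets, in the form read off the matrices. -/
theorem eq_zero_of_consecutive_minors {b1 c1 d1 b2 c2 d2 b4 c4 d4 Q R : k}
    (hbc1 : b1 * c4 - b4 * c1 = 0) (hcd1 : c1 * d4 - c4 * d1 = 0)
    (hbc2 : b2 * c4 - b4 * c2 = 0) (hcd2 : c2 * d4 - c4 * d2 = 0)
    (hQ : Q = b1 * c2 - b2 * c1) (hR : R = c1 * d2 - c2 * d1)
    (hz : b1 * R - Q * d1 ≠ 0 ∨ b2 * R - Q * d2 ≠ 0) :
    b4 = 0 ∧ c4 = 0 ∧ d4 = 0 := by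
  have hc : c1 ≠ 0 ∨ c2 ≠ 0 := by
    by_contra! hc
    obtain ⟨rfl, rfl⟩ := hc
    subst hQ hR
    simp at hz
  have hc4 : c4 = 0 := by
    by_contra hc4
    have hQ0 : Q = 0 := (mul_eq_zero.mp (by linear_combination c2 * hbc1 - c1 * hbc2 + c4 * hQ :
      Q * c4 = 0)).resolve_right hc4
    have hR0 : R = 0 := (mul_eq_zero.mp (by linear_combination c2 * hcd1 - c1 * hcd2 + c4 * hR :
      R * c4 = 0)).resolve_right hc4
    simp [hQ0, hR0] at hz
  subst hc4
  rcases hc with hc | hc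
  · exact ⟨(mul_eq_zero.mp (by linear_combination -hbc1 : b4 * c1 = 0)).resolve_right hc, rfl,
      (mul_eq_zero.mp (by linear_combination hcd1 : c1 * d4 = 0)).resolve_left hc⟩
  · exact ⟨(mul_eq_zero.mp (by linear_combination -hbc2 : b4 * c2 = 0)).resolve_right hc, rfl,
      (mul_eq_zero.mp (by linear_combination hcd2 : c2 * d4 = 0)).resolve_left hc⟩

theorem exists_sq_of_mul_sq_eq {ε u v : k} (h : ε * v ^ 2 = u ^ 2) (huv : u ≠ 0 ∨ v ≠ 0) :
    ∃ a : k, a ^ 2 = ε := by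
  have hv : v ≠ 0 := by
    rintro rfl
    exact huv.resolve_right (not_not.mpr rfl)
      (pow_eq_zero_iff two_ne_zero |>.mp (by simpa using h.symm))
  exact ⟨u / v, by rw [div_pow, ← h]; field_simp⟩

theorem exists_sq_of_ratio_ne_zero {ε t b1 c1 d1 b2 c2 d2 p4 q4 r4 z1 z2 : k}
    (h2 : (2 : k) ≠ 0) (ht : t ≠ 0)
    (hz1 : z1 = b1 * (c1 * d2 - c2 * d1) - (b1 * c2 - b2 * c1) * d1)
    (hz2 : z2 = b2 * (c1 * d2 - c2 * d1) - (b1 * c2 - b2 * c1) * d2)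
    (hT1 : t * d1 * (b1 * c2 - b2 * c1) - (t * d1 * b2 - t * d2 * b1) * c1 = t * z1)
    (hT2 : t * d2 * (b1 * c2 - b2 * c1) - (t * d1 * b2 - t * d2 * b1) * c2 = t * z2)
    (hE1 : t * d1 * q4 - p4 * c1 = ε * (t * z2)) (hE2 : b1 * r4 - q4 * d1 = ε * z2)
    (hE3 : t * d2 * q4 - p4 * c2 = t * z1) (hE4 : b2 * r4 - q4 * d2 = z1)
    (hz : z1 ≠ 0 ∨ z2 ≠ 0) : ∃ a : k, a ^ 2 = ε := by
  have hT1 : d1 * (b1 * c2 - b2 * c1) + (b1 * d2 - b2 * d1) * c1 = z1 :=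
    mul_left_cancel₀ ht (by linear_combination hT1)
  have hT2 : d2 * (b1 * c2 - b2 * c1) + (b1 * d2 - b2 * d1) * c2 = z2 :=
    mul_left_cancel₀ ht (by linear_combination hT2)
  have hq4 : (c1 * d2 - c2 * d1) * q4 = c1 * z1 - ε * c2 * z2 := mul_left_cancel₀ ht (by
      linear_combination c1 * hE3 - c2 * hE1)
  have hq4' : (b1 * d2 - b2 * d1) * q4 = ε * b2 * z2 - b1 * z1 := by
    linear_combination b2 * hE2 - b1 * hE4
  -- Multiplying the two expressions for `q₄` crosswise gives `2 (ε z₂² - z₁²) = 0`.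
  refine exists_sq_of_mul_sq_eq ((mul_right_inj' h2).mp ?_) hz
  linear_combination (b1 * d2 - b2 * d1) * hq4 - (c1 * d2 - c2 * d1) * hq4' + z1 * hT1
    - ε * z2 * hT2 - z1 * hz1 + ε * z2 * hz2

theorem exists_sq_of_ratio_eq_zero {ε b1 c1 d1 p1 r1 b2 c2 d2 p2 r2 p4 q4 r4 m4 z1 z2 w1 w2 : k}
    (hz1 : z1 = b1 * (c1 * d2 - c2 * d1) - (b1 * c2 - b2 * c1) * d1)
    (hz2 : z2 = b2 * (c1 * d2 - c2 * d1) - (b1 * c2 - b2 * c1) * d2)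
    (hw1 : w1 = p1 * (c1 * d2 - c2 * d1) - (p1 * c2 - p2 * c1) * d1)
    (hw2 : w2 = p2 * (c1 * d2 - c2 * d1) - (p1 * c2 - p2 * c1) * d2)
    (hE1 : p4 * c1 = 0) (hE3 : p4 * c2 = 0)
    (hE2 : b1 * r4 - q4 * d1 = ε * z2) (hE4 : b2 * r4 - q4 * d2 = z1)
    (hF1 : p1 * r4 - p4 * r1 - m4 * d1 = ε * w2) (hF2 : p2 * r4 - p4 * r2 - m4 * d2 = w1)
    (hN : z1 * w2 ≠ z2 * w1) : ∃ a : k, a ^ 2 = ε := by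
  subst hz1 hz2 hw1 hw2
  set N := (b1 * (c1 * d2 - c2 * d1) - (b1 * c2 - b2 * c1) * d1) * p2
    - (b2 * (c1 * d2 - c2 * d1) - (b1 * c2 - b2 * c1) * d2) * p1
    - (p1 * c2 - p2 * c1) * (b1 * d2 - b2 * d1)
  have hRN : (c1 * d2 - c2 * d1) * N ≠ 0 := fun h => hN (by linear_combination h)
  have hp4 : p4 = 0 := by
    by_contra hp4
    have hc1 := (mul_eq_zero.mp hE1).resolve_left hp4
    have hc2 := (mul_eq_zero.mp hE3).resolve_left hp4
    exact hRN (by rw [hc1, hc2]; ring)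
  subst hp4
  have key : (ε * d2 ^ 2 - d1 ^ 2) * N = 0 := by
    linear_combination (p1 * d2 - p2 * d1) * (d2 * hE2 - d1 * hE4)
      - (b1 * d2 - b2 * d1) * (d2 * hF1 - d1 * hF2)
  refine exists_sq_of_mul_sq_eq (sub_eq_zero.mp ((mul_eq_zero.mp key).resolve_right
    (right_ne_zero_of_mul hRN))) ?_
  by_contra! hd
  exact hRN (by rw [hd.1, hd.2]; ring)

end Algebra

section Core

variable {k : Type*} [Field k]

open Matrix.VanishesBelowSuperdiag

theorem mul_ne_mul_of_linearIndependent {Z1 Z2 : Matrix (Fin 5) (Fin 5) k}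
    (hZ1 : Z1.VanishesBelowSuperdiag 3) (hZ2 : Z2.VanishesBelowSuperdiag 3)
    (hind : LinearIndependent k ![Z1, Z2]) {t : k} (hx1 : Z1 0 3 = t * Z1 1 4)
    (hx2 : Z2 0 3 = t * Z2 1 4) (hz : Z1 1 4 ≠ 0 ∨ Z2 1 4 ≠ 0) :
    Z1 1 4 * Z2 0 4 ≠ Z2 1 4 * Z1 0 4 := by
  intro h
  have hrel : Z2 1 4 • Z1 + (-Z1 1 4) • Z2 = 0 := by
    rw [neg_smul, ← sub_eq_add_neg]
    refine ext_of_three ((hZ1.smul _).sub (hZ2.smul _)) (fun _ _ _ => rfl) ?_ ?_ ?_ <;>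
      simp only [Matrix.sub_apply, Matrix.smul_apply, smul_eq_mul, Matrix.zero_apply]
    · rw [hx1, hx2]; ring
    · ring
    · rw [h]; ring
  obtain ⟨h1, h2⟩ := LinearIndependent.pair_iff.mp hind _ _ hrel
  exact hz.elim (· (neg_eq_zero.mp h2)) (· h1)

theorem entry_ne_zero_of_linearIndependent {Z1 Z2 : Matrix (Fin 5) (Fin 5) k}
    (hZ1 : Z1.VanishesBelowSuperdiag 3) (hZ2 : Z2.VanishesBelowSuperdiag 3)
    (hind : LinearIndependent k ![Z1, Z2]) :
    (Z1 1 4 ≠ 0 ∨ Z2 1 4 ≠ 0) ∨ (Z1 0 3 ≠ 0 ∨ Z2 0 3 ≠ 0) := by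
  by_contra! h
  obtain ⟨⟨h14, h24⟩, h13, h23⟩ := h
  have hrel : Z2 0 4 • Z1 + (-Z1 0 4) • Z2 = 0 := by
    rw [neg_smul, ← sub_eq_add_neg]
    refine ext_of_three ((hZ1.smul _).sub (hZ2.smul _)) (fun _ _ _ => rfl) ?_ ?_ ?_ <;>
      simp only [Matrix.sub_apply, Matrix.smul_apply, smul_eq_mul, Matrix.zero_apply, h13, h23,
        h14, h24] <;> ring
  obtain ⟨h1, h2⟩ := LinearIndependent.pair_iff.mp hind _ _ hrel
  refine hind.ne_zero 0 (ext_of_three hZ1 (fun _ _ _ => rfl) h13 h14 ?_)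
  simpa using h2

theorem exists_sq_of_L624_matrices_of_ratio {ε t : k} (h2ne : (2 : k) ≠ 0)
    {X1 X2 X3 X4 Z1 Z2 : Matrix (Fin 5) (Fin 5) k}
    (h1 : X1.VanishesBelowSuperdiag 1) (h2 : X2.VanishesBelowSuperdiag 1)
    (h4 : X4.VanishesBelowSuperdiag 2)
    (h12 : ⁅X1, X2⁆ = X3) (h13 : ⁅X1, X3⁆ = Z1) (h14 : ⁅X1, X4⁆ = ε • Z2)
    (h23 : ⁅X2, X3⁆ = Z2) (h24 : ⁅X2, X4⁆ = Z1)
    (ha1 : X1 0 1 = t * X1 3 4) (ha2 : X2 0 1 = t * X2 3 4)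
    (hx1 : Z1 0 3 = t * Z1 1 4) (hx2 : Z2 0 3 = t * Z2 1 4)
    (hN : Z1 1 4 * Z2 0 4 ≠ Z2 1 4 * Z1 0 4) (hz : Z1 1 4 ≠ 0 ∨ Z2 1 4 ≠ 0) :
    ∃ a : k, a ^ 2 = ε := by
  have h3 : X3.VanishesBelowSuperdiag 2 := h12 ▸ h1.lie h2
  have hX3_02 := h12 ▸ lie_apply_02 h1 h2
  have hX3_13 := h12 ▸ lie_apply_13 h1 h2
  have hX3_24 := h12 ▸ lie_apply_24 h1 h2
  have hX3_03 := h12 ▸ lie_apply_03 h1 h2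
  have hZ1_14 := h13 ▸ lie_apply_14_of_two h1 h3
  have hZ2_14 := h23 ▸ lie_apply_14_of_two h2 h3
  rw [hX3_13, hX3_24] at hZ1_14 hZ2_14
  have hE1 := congr_fun₂ h14 0 3
  have hE2 := congr_fun₂ h14 1 4
  have hE3 := congr_fun₂ h24 0 3
  have hE4 := congr_fun₂ h24 1 4
  rw [lie_apply_03_of_two h1 h4, Matrix.smul_apply, smul_eq_mul, ha1, hx2] at hE1
  rw [lie_apply_14_of_two h1 h4, Matrix.smul_apply, smul_eq_mul] at hE2
  rw [lie_apply_03_of_two h2 h4, ha2, hx1] at hE3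
  rw [lie_apply_14_of_two h2 h4] at hE4
  rcases eq_or_ne t 0 with rfl | ht
  · have hF1 := congr_fun₂ h14 0 4
    have hF2 := congr_fun₂ h24 0 4
    have hZ1_04 := h13 ▸ lie_apply_04_of_two h1 h3
    have hZ2_04 := h23 ▸ lie_apply_04_of_two h2 h3
    rw [lie_apply_04_of_two h1 h4, Matrix.smul_apply, smul_eq_mul, ha1] at hF1
    rw [lie_apply_04_of_two h2 h4, ha2] at hF2
    rw [hX3_02, hX3_03, hX3_24, ha1, ha2] at hZ1_04 hZ2_04
    simp only [mul_zero, zero_mul, zero_add, sub_zero, sub_self, zero_sub, neg_eq_zero]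
      at hE1 hE3 hF1 hF2 hZ1_04 hZ2_04
    exact exists_sq_of_ratio_eq_zero hZ1_14 hZ2_14 hZ1_04 hZ2_04 hE1 hE3 hE2 hE4 hF1 hF2 hN
  · have hZ1_03 := h13 ▸ lie_apply_03_of_two h1 h3
    have hZ2_03 := h23 ▸ lie_apply_03_of_two h2 h3
    rw [hZ1_03, hX3_02, hX3_13, ha1, ha2] at hx1
    rw [hZ2_03, hX3_02, hX3_13, ha1, ha2] at hx2
    exact exists_sq_of_ratio_ne_zero h2ne ht hZ1_14 hZ2_14 hx1 hx2 hE1 hE2 hE3 hE4 hz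

theorem exists_sq_of_L624_matrices {ε : k} (h2ne : (2 : k) ≠ 0)
    {X1 X2 X3 X4 Z1 Z2 : Matrix (Fin 5) (Fin 5) k}
    (h1 : X1.VanishesBelowSuperdiag 1) (h2 : X2.VanishesBelowSuperdiag 1)
    (h4 : X4.VanishesBelowSuperdiag 1)
    (h12 : ⁅X1, X2⁆ = X3) (h13 : ⁅X1, X3⁆ = Z1) (h14 : ⁅X1, X4⁆ = ε • Z2)
    (h23 : ⁅X2, X3⁆ = Z2) (h24 : ⁅X2, X4⁆ = Z1)
    (hcent : ∀ i j, ⁅![X1, X2, X4] i, ![Z1, Z2] j⁆ = 0)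
    (hind : LinearIndependent k ![Z1, Z2]) (hz : Z1 1 4 ≠ 0 ∨ Z2 1 4 ≠ 0) :
    ∃ a : k, a ^ 2 = ε := by
  have h3 : X3.VanishesBelowSuperdiag 2 := h12 ▸ h1.lie h2
  have hZ1 : Z1.VanishesBelowSuperdiag 3 := h13 ▸ h1.lie h3
  have hZ2 : Z2.VanishesBelowSuperdiag 3 := h23 ▸ h2.lie h3
  have hZ1_14 := h13 ▸ lie_apply_14_of_two h1 h3
  have hZ2_14 := h23 ▸ lie_apply_14_of_two h2 h3
  obtain ⟨t, ha, hx⟩ := exists_common_ratio (a := fun i => ![X1, X2, X4] i 0 1)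
    (d := fun i => ![X1, X2, X4] i 3 4) (x := fun j => ![Z1, Z2] j 0 3)
    (y := fun j => ![Z1, Z2] j 1 4) (hz.elim (⟨0, ·⟩) (⟨1, ·⟩))
    (fun i j => by
      have hX : (![X1, X2, X4] i).VanishesBelowSuperdiag 1 := by fin_cases i <;> assumption
      have hZ : (![Z1, Z2] j).VanishesBelowSuperdiag 3 := by fin_cases j <;> assumption
      have h04 := congr_fun₂ (hcent i j) 0 4
      rw [lie_apply_04_of_three hX hZ, Matrix.zero_apply] at h04
      linear_combination h04)
    (fun h0 j => by
      have a1 : X1 0 1 = 0 := h0 0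
      have a2 : X2 0 1 = 0 := h0 1
      fin_cases j <;> simp [h13 ▸ lie_apply_03_of_two h1 h3, h23 ▸ lie_apply_03_of_two h2 h3,
        h12 ▸ lie_apply_02 h1 h2, a1, a2])
  have h14' : ⁅X1, X4⁆.VanishesBelowSuperdiag 3 := h14 ▸ hZ2.smul ε
  have h24' : ⁅X2, X4⁆.VanishesBelowSuperdiag 3 := h24 ▸ hZ1
  obtain ⟨hb4, hc4, hd4⟩ := eq_zero_of_consecutive_minors
    ((lie_apply_13 h1 h4).symm.trans (h14' 1 3 (by decide)))
    ((lie_apply_24 h1 h4).symm.trans (h14' 2 4 (by decide)))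
    ((lie_apply_13 h2 h4).symm.trans (h24' 1 3 (by decide)))
    ((lie_apply_24 h2 h4).symm.trans (h24' 2 4 (by decide)))
    (h12 ▸ lie_apply_13 h1 h2) (h12 ▸ lie_apply_24 h1 h2) (by rwa [hZ1_14, hZ2_14] at hz)
  have ha4 : X4 0 1 = 0 := by rw [show X4 0 1 = t * X4 3 4 from ha 2, hd4, mul_zero]
  exact exists_sq_of_L624_matrices_of_ratio h2ne h1 h2 (two_of_superdiag_eq_zero h4 ha4 hb4 hc4 hd4)
    h12 h13 h14 h23 h24 (ha 0) (ha 1) (hx 0) (hx 1)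
    (mul_ne_mul_of_linearIndependent hZ1 hZ2 hind (hx 0) (hx 1) hz) hz

end Core

theorem Module.Basis.linearIndependent_pair_of_injective {ι R M N : Type*} [Ring R]
    [AddCommGroup M] [Module R M] [AddCommGroup N] [Module R N] (b : Module.Basis ι R M)
    {i j : ι} (hij : i ≠ j) {f : M →ₗ[R] N} (hf : Function.Injective f) :
    LinearIndependent R ![f (b i), f (b j)] := by
  refine LinearIndependent.pair_iff.mpr fun s t hst =>
    (LinearIndepOn.pair_iff _ hij).mp (b.linearIndependent.linearIndepOn _) s t (hf ?_)
  rw [map_add, map_smul, map_smul, hst, map_zero]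

section Bridge

variable {k L : Type*} [Field k] [LieRing L] [LieAlgebra k L] {ε : k}
  {b : Module.Basis (Fin 6) k L}

theorem IsL624Basis.exists_sq_of_entry_ne_zero (hb : IsL624Basis ε b) (h2 : (2 : k) ≠ 0)
    {f : L →ₗ⁅k⁆ Matrix (Fin 5) (Fin 5) k} (hf : Function.Injective f)
    (hup : ∀ x, f x ∈ strictUpper k 5) (hz : f (b 4) 1 4 ≠ 0 ∨ f (b 5) 1 4 ≠ 0) :
    ∃ a : k, a ^ 2 = ε := by
  obtain ⟨h01, h02, h03, h12, h13, z04, z05, z14, z15, -, -, -, z34, z35, -⟩ := hb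
  have hX : ∀ i, (f (b i)).VanishesBelowSuperdiag 1 := fun i => mem_strictUpper_iff.mp (hup _)
  have hind : LinearIndependent k ![f (b 4), f (b 5)] :=
    b.linearIndependent_pair_of_injective (by decide) (f := f.toLinearMap) hf
  refine exists_sq_of_L624_matrices (X3 := f (b 2)) h2 (hX 0) (hX 1) (hX 3)
    (by rw [← f.map_lie, h01]) (by rw [← f.map_lie, h02]) (by rw [← f.map_lie, h03, map_smul])
    (by rw [← f.map_lie, h12]) (by rw [← f.map_lie, h13]) ?_
    hind hz
  intro i j
  fin_cases i <;> fin_cases j <;> simp [← f.map_lie, z04, z05, z14, z15, z34, z35]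

theorem IsL624Basis.exists_sq_of_lieHom_strictUpper_five (hb : IsL624Basis ε b)
    (h2 : (2 : k) ≠ 0) {f : L →ₗ⁅k⁆ Matrix (Fin 5) (Fin 5) k} (hf : Function.Injective f)
    (hup : ∀ x, f x ∈ strictUpper k 5) : ∃ a : k, a ^ 2 = ε := by
  have hX : ∀ i, (f (b i)).VanishesBelowSuperdiag 1 := fun i => mem_strictUpper_iff.mp (hup _)
  have hZ4 : (f (b 4)).VanishesBelowSuperdiag 3 := by
    rw [← hb.2.1, f.map_lie, ← hb.1, f.map_lie]
    exact (hX 0).lie ((hX 0).lie (hX 1))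
  have hZ5 : (f (b 5)).VanishesBelowSuperdiag 3 := by
    rw [← hb.2.2.2.1, f.map_lie, ← hb.1, f.map_lie]
    exact (hX 1).lie ((hX 0).lie (hX 1))
  have hind : LinearIndependent k ![f (b 4), f (b 5)] :=
    b.linearIndependent_pair_of_injective (by decide) (f := f.toLinearMap) hf
  rcases entry_ne_zero_of_linearIndependent hZ4 hZ5 hind with hz | hz
  · exact hb.exists_sq_of_entry_ne_zero h2 hf hup hz
  · refine hb.exists_sq_of_entry_ne_zero h2 (f := (antitransposeLieHom k).comp f)
      ((antitransposeLieHom_injective k).comp hf)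
      (fun x => antitransposeLieHom_mem_strictUpper (hup x)) ?_
    simpa [antitransposeLieHom_apply] using hz

end Bridge

theorem IsL624Basis.exists_sq_of_lieHom_strictUpper {k L : Type*} [Field k] [LieRing L]
    [LieAlgebra k L] {ε : k} {b : Module.Basis (Fin 6) k L} (hb : IsL624Basis ε b)
    (h2 : (2 : k) ≠ 0) {n : ℕ} (hn : n ≤ 5) {f : L →ₗ⁅k⁆ Matrix (Fin n) (Fin n) k}
    (hf : Function.Injective f) (hup : ∀ x, f x ∈ strictUpper k n) : ∃ a : k, a ^ 2 = ε :=
  hb.exists_sq_of_lieHom_strictUpper_five h2 (f := (padLieHom k hn).comp f)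
    ((padLieHom_injective k hn).comp hf) fun x => padLieHom_mem_strictUpper hn (hup x)

/-- If `n_5(k)` contains a Lie subalgebra isomorphic to `L_{6,24}(ε)` then `ε` is a square
in `k`; consequently, if `ε` is not a square in `k`, then any Lie subalgebra of `n_n(k)`
isomorphic to `L_{6,24}(ε)` forces `n ≥ 6`. -/
theorem L624_subalgebra_strictUpper
    (k : Type*) [Field k] [CharZero k] (ε : k) :
    ((∃ g : LieSubalgebra k (Matrix (Fin 5) (Fin 5) k), g ≤ strictUpper k 5 ∧
        ∃ b : Module.Basis (Fin 6) k g, IsL624Basis ε b) → ∃ a : k, a ^ 2 = ε) ∧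
    ((∀ a : k, a ^ 2 ≠ ε) → ∀ (n : ℕ) (g : LieSubalgebra k (Matrix (Fin n) (Fin n) k)),
        g ≤ strictUpper k n → (∃ b : Module.Basis (Fin 6) k g, IsL624Basis ε b) → 6 ≤ n) := by
  have key : ∀ n ≤ 5, ∀ g : LieSubalgebra k (Matrix (Fin n) (Fin n) k), g ≤ strictUpper k n →
      ∀ b : Module.Basis (Fin 6) k g, IsL624Basis ε b → ∃ a : k, a ^ 2 = ε :=
    fun n hn g hg b hb => hb.exists_sq_of_lieHom_strictUpper two_ne_zero hn (f := g.incl)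
      Subtype.val_injective fun x => hg x.2
  refine ⟨fun ⟨g, hg, b, hb⟩ => key 5 le_rfl g hg b hb, fun hε n g hg ⟨b, hb⟩ => ?_⟩
  by_contra! hn
  obtain ⟨a, ha⟩ := key n (by omega) g hg b hb
  exact hε a ha
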